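/- Let S ⊂ ℝ^{n+1} be a nonempty compact set. For every y ∈ ℝ^{n+1} and every r with 0 < r < u_θ(y), one has dist(y − r cos θ · E_{n+1}, S) > r, where dist denotes the Euclidean distance from a point to the set S. -/

import Mathlib

open Metric MeasureTheory

noncomputable section

abbrev Euc (n : ℕ) : Type := EuclideanSpace ℝ (Fin (n + 1))

/-- The vertical unit vector `E_{n+1} = (0, …, 0, 1)`. -/
def lastE (n : ℕ) : Euc n := EuclideanSpace.single (Fin.last n) 1

/-- The capillary gauge `F_θ(ξ) = |ξ| - cos θ ⟨ξ, E_{n+1}⟩`. -/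
def capF (n : ℕ) (θ : ℝ) (ξ : Euc n) : ℝ :=
  ‖ξ‖ - Real.cos θ * (inner ℝ ξ (lastE n) : ℝ)

/-- The dual gauge `F°_θ(x) = sup {⟨x, z⟩ / F_θ(z) : z ∈ 𝕊ⁿ}`. -/
def capFdual (n : ℕ) (θ : ℝ) (x : Euc n) : ℝ :=
  ⨆ z : sphere (0 : Euc n) 1, (inner ℝ x (z : Euc n) : ℝ) / capF n θ (z : Euc n)

/-- The shifted distance to a set `S`: `u_θ(y) = inf_{z ∈ S} F°_θ(z - y)`. -/
def shiftedDist (n : ℕ) (θ : ℝ) (S : Set (Euc n)) (y : Euc n) : ℝ :=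
  sInf ((fun z => capFdual n θ (z - y)) '' S)

lemma lastE_norm (n : ℕ) : ‖lastE n‖ = 1 := by
  simp [lastE, EuclideanSpace.norm_single]

theorem stmt_11 (n : ℕ) (hn : 1 ≤ n) (θ : ℝ) (hθ : θ ∈ Set.Ioo 0 Real.pi)
    (S : Set (Euc n)) (hS : S.Nonempty) (hSc : IsCompact S)
    (y : Euc n) (r : ℝ) (hr : 0 < r) (hru : r < shiftedDist n θ S y) :
    r < Metric.infDist (y - (r * Real.cos θ) • lastE n) S := by
  haveI : Nonempty (sphere (0 : Euc n) 1) :=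
    ⟨⟨lastE n, by simp [mem_sphere_iff_norm, lastE_norm]⟩⟩
  have hcos : |Real.cos θ| < 1 := by
    have hs : 0 < Real.sin θ := Real.sin_pos_of_pos_of_lt_pi hθ.1 hθ.2
    have h2 : Real.cos θ ^ 2 < 1 := by nlinarith [Real.sin_sq_add_cos_sq θ]
    rw [abs_lt]; constructor <;> nlinarith
  -- positivity of capF on the sphere
  have hF : ∀ z : Euc n, ‖z‖ = 1 → 0 < capF n θ z := by
    intro z hz
    have h1 : |(inner ℝ z (lastE n) : ℝ)| ≤ 1 := by
      simpa [hz, lastE_norm] using abs_real_inner_le_norm z (lastE n)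
    have : |Real.cos θ * (inner ℝ z (lastE n) : ℝ)| < 1 := by
      rw [abs_mul]
      calc |Real.cos θ| * |(inner ℝ z (lastE n) : ℝ)| ≤ |Real.cos θ| * 1 :=
            mul_le_mul_of_nonneg_left h1 (abs_nonneg _)
        _ < 1 := by simpa using hcos
    have := abs_lt.1 this
    simp only [capF, hz]
    linarith [this.2]
  -- the key point z₀ achieving infDist
  obtain ⟨z₀, hz₀S, hz₀⟩ := hSc.exists_infDist_eq_dist hS (y - (r * Real.cos θ) • lastE n)
  rw [hz₀]
  -- r < capFdual n θ (z₀ - y)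
  have hbdd : BddBelow ((fun z => capFdual n θ (z - y)) '' S) := by
    refine ⟨0, ?_⟩
    rintro v ⟨z, hzS, rfl⟩
    -- capFdual ≥ 0 : sup of a family containing a nonnegative element, or 0 if x = 0
    have hBdd : BddAbove (Set.range fun w : sphere (0 : Euc n) 1 =>
        (inner ℝ (z - y) (w : Euc n) : ℝ) / capF n θ (w : Euc n)) := by
      refine ⟨‖z - y‖ / (1 - |Real.cos θ|), ?_⟩
      rintro v ⟨w, rfl⟩
      have hw : ‖(w : Euc n)‖ = 1 := by
        have := w.2; simpa [mem_sphere_iff_norm] using this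
      have hFw : 0 < capF n θ (w : Euc n) := hF _ hw
      have hnum : (inner ℝ (z - y) (w : Euc n) : ℝ) ≤ ‖z - y‖ := by
        have := real_inner_le_norm (z - y) (w : Euc n)
        rwa [hw, mul_one] at this
      have hFw' : 1 - |Real.cos θ| ≤ capF n θ (w : Euc n) := by
        have h1 : |(inner ℝ (w : Euc n) (lastE n) : ℝ)| ≤ 1 := by
          simpa [hw, lastE_norm] using abs_real_inner_le_norm (w : Euc n) (lastE n)
        have : |Real.cos θ * (inner ℝ (w : Euc n) (lastE n) : ℝ)| ≤ |Real.cos θ| := by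
          rw [abs_mul]
          calc |Real.cos θ| * |(inner ℝ (w : Euc n) (lastE n) : ℝ)| ≤ |Real.cos θ| * 1 :=
              mul_le_mul_of_nonneg_left h1 (abs_nonneg _)
            _ = |Real.cos θ| := mul_one _
        have := abs_le.1 this
        simp only [capF, hw]
        linarith [this.2]
      calc (inner ℝ (z - y) (w : Euc n) : ℝ) / capF n θ (w : Euc n)
          ≤ ‖z - y‖ / capF n θ (w : Euc n) := (div_le_div_iff_of_pos_right hFw).2 hnum
        _ ≤ ‖z - y‖ / (1 - |Real.cos θ|) := by
            apply div_le_div_of_nonneg_left (norm_nonneg _) (by linarith) hFw'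
    rcases eq_or_ne (z - y) 0 with h0 | h0
    · have : capFdual n θ (z - y) = 0 := by
        simp [capFdual, h0]
      simp [this]
    · have hmem : ((‖z - y‖)⁻¹ • (z - y) : Euc n) ∈ sphere (0 : Euc n) 1 := by
        simp [norm_smul, norm_ne_zero_iff.2 h0, abs_of_nonneg (inv_nonneg.2 (norm_nonneg _)),
          inv_mul_cancel₀ (norm_ne_zero_iff.2 h0)]
      have hle := le_ciSup hBdd (⟨_, hmem⟩ : sphere (0 : Euc n) 1)
      refine le_trans ?_ hle
      have hw : ‖((‖z - y‖)⁻¹ • (z - y) : Euc n)‖ = 1 := by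
        simpa [mem_sphere_iff_norm] using hmem
      have hFw : 0 < capF n θ ((‖z - y‖)⁻¹ • (z - y)) := hF _ hw
      have hnum : (0 : ℝ) ≤ (inner ℝ (z - y) ((‖z - y‖)⁻¹ • (z - y) : Euc n) : ℝ) := by
        rw [real_inner_smul_right]
        exact mul_nonneg (inv_nonneg.2 (norm_nonneg _)) real_inner_self_nonneg
      exact div_nonneg hnum hFw.le
  have hle : shiftedDist n θ S y ≤ capFdual n θ (z₀ - y) :=
    csInf_le hbdd ⟨z₀, hz₀S, rfl⟩
  have hr2 : r < capFdual n θ (z₀ - y) := lt_of_lt_of_le hru hle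
  -- extract a witness
  obtain ⟨w, hw⟩ := exists_lt_of_lt_ciSup hr2
  have hwn : ‖(w : Euc n)‖ = 1 := by
    have := w.2; simpa [mem_sphere_iff_norm] using this
  have hFw : 0 < capF n θ (w : Euc n) := hF _ hwn
  have hineq : r * capF n θ (w : Euc n) < (inner ℝ (z₀ - y) (w : Euc n) : ℝ) :=
    (lt_div_iff₀ hFw).1 hw
  have hcapF : capF n θ (w : Euc n) = 1 - Real.cos θ * (inner ℝ (w : Euc n) (lastE n) : ℝ) := by
    simp [capF, hwn]
  -- ⟨z₀ - y + (r cos θ) • E, w⟩ > r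
  have hkey : r < (inner ℝ (z₀ - (y - (r * Real.cos θ) • lastE n)) (w : Euc n) : ℝ) := by
    have hexp : z₀ - (y - (r * Real.cos θ) • lastE n) = (z₀ - y) + (r * Real.cos θ) • lastE n := by
      abel
    rw [hexp, inner_add_left, real_inner_smul_left]
    rw [hcapF] at hineq
    have : (inner ℝ (lastE n) (w : Euc n) : ℝ) = (inner ℝ (w : Euc n) (lastE n) : ℝ) :=
      real_inner_comm _ _
    rw [this]
    nlinarith [hineq]
  calc r < (inner ℝ (z₀ - (y - (r * Real.cos θ) • lastE n)) (w : Euc n) : ℝ) := hkey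
    _ ≤ ‖z₀ - (y - (r * Real.cos θ) • lastE n)‖ := by
        have := real_inner_le_norm (z₀ - (y - (r * Real.cos θ) • lastE n)) (w : Euc n)
        rwa [hwn, mul_one] at this
    _ = dist (y - (r * Real.cos θ) • lastE n) z₀ := by
        rw [dist_eq_norm, ← norm_neg]; congr 1; abel
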